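/- Randomly permuted Hamming-distance lists reveal nothing about the codeword: Let B be an F_2-linear subspace of F_2^n whose 2^k elements are enumerated by a bijection i ↦ c_i from {1, …, 2^k} to B, and let e ∈ F_2^n be a fixed vector. Let c be a random variable uniformly distributed on B and let π be a random variable uniformly distributed on the permutations of {1, …, 2^k}, with c and π independent. Define the random tuple T = (d_H(c + e, c_{π(1)}), …, d_H(c + e, c_{π(2^k)})). Then H(c | T) = H(c); equivalently, c and T are independent. -/

import Mathlib

open MeasureTheory ProbabilityTheory

/-- Shannon entropy (natural logarithm) of a discrete random variable `X`:
`H(X) = -∑ₓ P(X = x) · log P(X = x)`. -/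
noncomputable def shannonEntropy {Ω α : Type*} [MeasurableSpace Ω]
    (μ : Measure Ω) (X : Ω → α) : ℝ :=
  -∑' a : α, ((μ (X ⁻¹' {a})).toReal * Real.log (μ (X ⁻¹' {a})).toReal)

/-- Conditional Shannon entropy `H(X | Y) = H(X, Y) - H(Y)`. -/
noncomputable def condShannonEntropy {Ω α β : Type*} [MeasurableSpace Ω]
    (μ : Measure Ω) (X : Ω → α) (Y : Ω → β) : ℝ :=
  shannonEntropy μ (fun ω => (X ω, Y ω)) - shannonEntropy μ Y

/-- The random variable `X` is uniformly distributed on the set `S`. -/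
def IsUniformOn {Ω α : Type*} [MeasurableSpace Ω]
    (μ : Measure Ω) (X : Ω → α) (S : Set α) : Prop :=
  ∀ a : α, open scoped Classical in μ (X ⁻¹' {a}) = if a ∈ S then (Nat.card S : ENNReal)⁻¹ else 0

instance {m : ℕ} : MeasurableSpace (Equiv.Perm (Fin m)) := ⊤

lemma measure_biUnion_filter_eq {Ω ι : Type*} [MeasurableSpace Ω] (μ : Measure Ω)
    [Fintype ι] (A : ι → Set Ω)
    (hcov : (⋃ i, A i) = Set.univ)
    (hsum : ∑ i, μ (A i) = μ Set.univ)
    (hfin : μ Set.univ ≠ ⊤)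
    (P : ι → Prop) [DecidablePred P] :
    μ (⋃ i ∈ Finset.univ.filter P, A i) = ∑ i ∈ Finset.univ.filter P, μ (A i) := by
  classical
  set b := μ (⋃ i ∈ Finset.univ.filter P, A i) with hbdef
  set c := μ (⋃ i ∈ Finset.univ.filter (fun i => ¬ P i), A i) with hcdef
  have hb : b ≤ ∑ i ∈ Finset.univ.filter P, μ (A i) := measure_biUnion_finset_le _ _
  have hc : c ≤ ∑ i ∈ Finset.univ.filter (fun i => ¬ P i), μ (A i) :=
    measure_biUnion_finset_le _ _
  have htot : ∑ i ∈ Finset.univ.filter P, μ (A i)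
      + ∑ i ∈ Finset.univ.filter (fun i => ¬ P i), μ (A i) = μ Set.univ := by
    rw [Finset.sum_filter_add_sum_filter_not]; exact hsum
  have hsub : (Set.univ : Set Ω) ⊆ (⋃ i ∈ Finset.univ.filter P, A i)
      ∪ (⋃ i ∈ Finset.univ.filter (fun i => ¬ P i), A i) := by
    rw [← hcov]
    intro ω hω
    obtain ⟨i, hi⟩ := Set.mem_iUnion.1 hω
    by_cases hP : P i
    · exact Or.inl (Set.mem_biUnion (Finset.mem_coe.2 (Finset.mem_filter.2 ⟨Finset.mem_univ i, hP⟩)) hi)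
    · exact Or.inr (Set.mem_biUnion (Finset.mem_coe.2 (Finset.mem_filter.2 ⟨Finset.mem_univ i, hP⟩)) hi)
  have hcup : μ Set.univ ≤ b + c :=
    le_trans (measure_mono hsub) (measure_union_le _ _)
  have hcne : ∑ i ∈ Finset.univ.filter (fun i => ¬ P i), μ (A i) ≠ ⊤ := by
    intro h
    rw [← htot] at hfin
    exact hfin (by rw [h, add_top])
  have hge : ∑ i ∈ Finset.univ.filter P, μ (A i) ≤ b := by
    have h1 : ∑ i ∈ Finset.univ.filter P, μ (A i)
        + ∑ i ∈ Finset.univ.filter (fun i => ¬ P i), μ (A i)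
        ≤ b + ∑ i ∈ Finset.univ.filter (fun i => ¬ P i), μ (A i) := by
      calc _ = μ Set.univ := htot
        _ ≤ b + c := hcup
        _ ≤ _ := add_le_add_right hc b
    exact ENNReal.le_of_add_le_add_right hcne h1
  exact le_antisymm hb hge

/-- Randomly permuted Hamming-distance lists reveal nothing about the codeword:
if `c` is uniform on a `k`-dimensional code `B ⊆ 𝔽₂ⁿ` (enumerated by `cw`), `π` is a
uniformly random permutation of `{1, …, 2^k}` independent of `c`, and
`T = (d_H(c + e, c_{π(1)}), …, d_H(c + e, c_{π(2^k)}))`, then `H(c | T) = H(c)`. -/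
theorem stmt_8 {n k : ℕ} {Ω : Type*} [MeasurableSpace Ω]
    (μ : Measure Ω) [IsProbabilityMeasure μ]
    (B : Submodule (ZMod 2) (Fin n → ZMod 2))
    (hBk : Module.finrank (ZMod 2) B = k)
    (cw : Fin (2 ^ k) → (Fin n → ZMod 2))
    (hcw : Set.BijOn cw Set.univ (B : Set (Fin n → ZMod 2)))
    (e : Fin n → ZMod 2)
    (c : Ω → (Fin n → ZMod 2))
    (hc : IsUniformOn μ c (B : Set (Fin n → ZMod 2)))
    (π : Ω → Equiv.Perm (Fin (2 ^ k)))
    (hπ : IsUniformOn μ π (Set.univ : Set (Equiv.Perm (Fin (2 ^ k)))))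
    (hind : IndepFun c π μ)
    (T : Ω → (Fin (2 ^ k) → ℕ))
    (hT : T = fun ω i => hammingDist (c ω + e) (cw (π ω i))) :
    condShannonEntropy μ c T = shannonEntropy μ c := by
  classical
  set F : (Fin n → ZMod 2) → Equiv.Perm (Fin (2^k)) → (Fin (2^k) → ℕ) :=
    fun x σ i => hammingDist (x + e) (cw (σ i)) with hF
  have hTF : ∀ ω, T ω = F (c ω) (π ω) := by intro ω; funext i; rw [hT]
  -- enumeration equiv
  set E : Fin (2^k) ≃ (B : Set (Fin n → ZMod 2)) :=
    (Equiv.Set.univ (Fin (2^k))).symm.trans (Set.BijOn.equiv cw hcw) with hEdef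
  have hE1 : ∀ j : Fin (2^k), (E j : Fin n → ZMod 2) = cw j := fun _ => rfl
  have hE2 : ∀ b : (B : Set (Fin n → ZMod 2)), cw (E.symm b) = (b : Fin n → ZMod 2) := by
    intro b
    conv_rhs => rw [← E.apply_symm_apply b]
    exact (hE1 _).symm
  -- cardinalities
  have hcardB : Nat.card (B : Set (Fin n → ZMod 2)) = 2^k := by
    rw [← Nat.card_congr E, Nat.card_eq_fintype_card, Fintype.card_fin]
  have hcardP : Nat.card (Set.univ : Set (Equiv.Perm (Fin (2^k)))) = (2^k).factorial := by
    rw [← Nat.card_congr (Equiv.Set.univ (Equiv.Perm (Fin (2^k)))).symm,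
      Nat.card_eq_fintype_card, Fintype.card_perm, Fintype.card_fin]
  -- uniform values
  have hmE0 : ((2^k : ℕ) : ENNReal) ≠ 0 := by positivity
  have hmET : ((2^k : ℕ) : ENNReal) ≠ ⊤ := by simp
  have hME0 : (((2^k).factorial : ℕ) : ENNReal) ≠ 0 := by
    simp [Nat.factorial_ne_zero]
  have hMET : (((2^k).factorial : ℕ) : ENNReal) ≠ ⊤ := by simp
  have hcmem : ∀ x ∈ (B : Set (Fin n → ZMod 2)), μ (c ⁻¹' {x}) = (((2^k : ℕ)) : ENNReal)⁻¹ := by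
    intro x hx; rw [hc x, if_pos hx, hcardB]
  have hcnot : ∀ x ∉ (B : Set (Fin n → ZMod 2)), μ (c ⁻¹' {x}) = 0 := by
    intro x hx; rw [hc x, if_neg hx]
  have hπσ : ∀ σ, μ (π ⁻¹' {σ}) = (((2^k).factorial : ℕ) : ENNReal)⁻¹ := by
    intro σ; rw [hπ σ, if_pos (Set.mem_univ σ), hcardP]
  -- independence of atoms
  have hA : ∀ (x : Fin n → ZMod 2) (σ : Equiv.Perm (Fin (2^k))),
      μ (c ⁻¹' {x} ∩ π ⁻¹' {σ}) = μ (c ⁻¹' {x}) * (((2^k).factorial : ℕ) : ENNReal)⁻¹ := by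
    intro x σ
    rw [← hπσ σ]
    exact hind.measure_inter_preimage_eq_mul {x} {σ} (measurableSet_singleton x)
      MeasurableSpace.measurableSet_top
  -- sum of uniform measures
  have hBcard' : (Finset.univ.filter (fun x : Fin n → ZMod 2 => x ∈ (B : Set (Fin n → ZMod 2)))).card = 2^k := by
    rw [← Fintype.card_subtype]
    rw [← hcardB, Nat.card_eq_fintype_card]
  have hsumc : ∑ x : Fin n → ZMod 2, μ (c ⁻¹' {x}) = 1 := by
    rw [← Finset.sum_filter_add_sum_filter_not Finset.univ (fun x => x ∈ (B : Set (Fin n → ZMod 2)))]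
    rw [Finset.sum_congr rfl (fun x hx => hcmem x (Finset.mem_filter.1 hx).2),
      Finset.sum_congr rfl (fun x hx => hcnot x (Finset.mem_filter.1 hx).2)]
    rw [Finset.sum_const, Finset.sum_const, hBcard']
    simp only [nsmul_eq_mul, smul_zero, add_zero, Nat.cast_pow, Nat.cast_ofNat]
    exact ENNReal.mul_inv_cancel (by positivity) (by simp)
  have hsumπ : ∑ σ : Equiv.Perm (Fin (2^k)), μ (π ⁻¹' {σ}) = 1 := by
    rw [Finset.sum_congr rfl (fun σ _ => hπσ σ), Finset.sum_const, Finset.card_univ,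
      Fintype.card_perm, Fintype.card_fin, nsmul_eq_mul]
    exact ENNReal.mul_inv_cancel hME0 hMET
  -- the atom partition
  set A : (Fin n → ZMod 2) × Equiv.Perm (Fin (2^k)) → Set Ω :=
    fun p => c ⁻¹' {p.1} ∩ π ⁻¹' {p.2} with hAdef
  have hcov : (⋃ p, A p) = Set.univ := by
    apply Set.eq_univ_of_forall
    intro ω
    exact Set.mem_iUnion.2 ⟨(c ω, π ω), ⟨rfl, rfl⟩⟩
  have hsumA : ∑ p : (Fin n → ZMod 2) × Equiv.Perm (Fin (2^k)), μ (A p) = μ Set.univ := by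
    rw [measure_univ, Fintype.sum_prod_type]
    calc ∑ x : Fin n → ZMod 2, ∑ σ : Equiv.Perm (Fin (2^k)), μ (A (x, σ))
        = ∑ x : Fin n → ZMod 2, ∑ σ : Equiv.Perm (Fin (2^k)), μ (c ⁻¹' {x}) * μ (π ⁻¹' {σ}) := by
          refine Finset.sum_congr rfl fun x _ => Finset.sum_congr rfl fun σ _ => ?_
          rw [hAdef, hA x σ, hπσ σ]
      _ = ∑ x : Fin n → ZMod 2, μ (c ⁻¹' {x}) * ∑ σ : Equiv.Perm (Fin (2^k)), μ (π ⁻¹' {σ}) := by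
          refine Finset.sum_congr rfl fun x _ => ?_
          rw [Finset.mul_sum]
      _ = 1 := by
          rw [hsumπ]; simp only [mul_one]; exact hsumc
  have hpart : ∀ (P : (Fin n → ZMod 2) × Equiv.Perm (Fin (2^k)) → Prop)
      (inst : DecidablePred P),
      μ (⋃ p ∈ @Finset.filter _ P inst Finset.univ, A p)
        = ∑ p ∈ @Finset.filter _ P inst Finset.univ, μ (A p) :=
    fun P inst => @measure_biUnion_filter_eq _ _ _ μ _ A hcov hsumA (by simp) P inst
  -- counting function
  set nt : (Fin n → ZMod 2) → (Fin (2^k) → ℕ) → ℕ :=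
    fun x t => (Finset.univ.filter (fun σ => F x σ = t)).card with hnt
  -- joint measure
  have hjoint : ∀ (x : Fin n → ZMod 2) (t : Fin (2^k) → ℕ),
      μ (c ⁻¹' {x} ∩ T ⁻¹' {t})
        = (nt x t : ENNReal) * (μ (c ⁻¹' {x}) * (((2^k).factorial : ℕ) : ENNReal)⁻¹) := by
    intro x t
    have h1 : c ⁻¹' {x} ∩ T ⁻¹' {t}
        = ⋃ p ∈ Finset.univ.filter
            (fun p : (Fin n → ZMod 2) × Equiv.Perm (Fin (2^k)) => p.1 = x ∧ F x p.2 = t), A p := by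
      ext ω
      simp only [hAdef, Set.mem_inter_iff, Set.mem_preimage, Set.mem_singleton_iff,
        Set.mem_iUnion, Finset.mem_coe, Finset.mem_filter, Finset.mem_univ, true_and]
      constructor
      · rintro ⟨hcx, hTt⟩
        exact ⟨(c ω, π ω), ⟨hcx, by rw [← hcx, ← hTF ω]; exact hTt⟩, rfl, rfl⟩
      · rintro ⟨p, ⟨hp1, hp2⟩, hc', hπ'⟩
        refine ⟨hc'.trans hp1, ?_⟩
        rw [hTF ω, hc', hπ', hp1, hp2]
    rw [h1, hpart _ _]
    have h2 : ∀ p ∈ Finset.univ.filter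
        (fun p : (Fin n → ZMod 2) × Equiv.Perm (Fin (2^k)) => p.1 = x ∧ F x p.2 = t),
        μ (A p) = μ (c ⁻¹' {x}) * (((2^k).factorial : ℕ) : ENNReal)⁻¹ := by
      intro p hp
      obtain ⟨hp1, _⟩ := (Finset.mem_filter.1 hp).2
      rw [hAdef]
      show μ (c ⁻¹' {p.1} ∩ π ⁻¹' {p.2}) = _
      rw [hA p.1 p.2, hp1]
    rw [Finset.sum_congr rfl h2, Finset.sum_const, nsmul_eq_mul]
    congr 1
    rw [hnt]
    norm_cast
    refine Finset.card_bij' (fun p _ => p.2) (fun σ _ => (x, σ)) ?_ ?_ ?_ ?_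
    · intro p hp
      obtain ⟨_, hp2⟩ := (Finset.mem_filter.1 hp).2
      exact Finset.mem_filter.2 ⟨Finset.mem_univ _, hp2⟩
    · intro σ hσ
      exact Finset.mem_filter.2 ⟨Finset.mem_univ _, ⟨rfl, (Finset.mem_filter.1 hσ).2⟩⟩
    · intro p hp
      obtain ⟨hp1, _⟩ := (Finset.mem_filter.1 hp).2
      exact Prod.ext hp1.symm rfl
    · intro σ _
      rfl
  -- marginal of T
  have hTm : ∀ t : Fin (2^k) → ℕ,
      μ (T ⁻¹' {t}) = ∑ y : Fin n → ZMod 2,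
        (nt y t : ENNReal) * (μ (c ⁻¹' {y}) * (((2^k).factorial : ℕ) : ENNReal)⁻¹) := by
    intro t
    have h1 : T ⁻¹' {t}
        = ⋃ p ∈ Finset.univ.filter
            (fun p : (Fin n → ZMod 2) × Equiv.Perm (Fin (2^k)) => F p.1 p.2 = t), A p := by
      ext ω
      simp only [hAdef, Set.mem_preimage, Set.mem_singleton_iff, Set.mem_iUnion,
        Finset.mem_coe, Finset.mem_filter, Finset.mem_univ, true_and, Set.mem_inter_iff]
      constructor
      · intro hTt
        exact ⟨(c ω, π ω), by rw [← hTF ω]; exact hTt, rfl, rfl⟩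
      · rintro ⟨p, hp, hc', hπ'⟩
        rw [hTF ω, hc', hπ', hp]
    rw [h1, hpart _ _, Finset.sum_filter, Fintype.sum_prod_type]
    refine Finset.sum_congr rfl fun y _ => ?_
    have h3 : ∀ σ : Equiv.Perm (Fin (2^k)),
        (if F y σ = t then μ (A (y, σ)) else 0)
        = (if F y σ = t then μ (c ⁻¹' {y}) * (((2^k).factorial : ℕ) : ENNReal)⁻¹ else 0) := by
      intro σ
      split_ifs with h
      · rw [hAdef]; exact hA y σ
      · rfl
    rw [Finset.sum_congr rfl fun σ _ => h3 σ, ← Finset.sum_filter, Finset.sum_const,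
      nsmul_eq_mul, hnt]
  -- invariance of nt on B
  have hinv : ∀ x ∈ (B : Set (Fin n → ZMod 2)), ∀ y ∈ (B : Set (Fin n → ZMod 2)),
      ∀ t, nt x t = nt y t := by
    intro x hx y hy t
    set E' : Fin (2^k) ≃ B :=
      E.trans (Equiv.subtypeEquivRight (fun z => SetLike.mem_coe)) with hE'def
    have hE1' : ∀ j : Fin (2^k), (E' j : Fin n → ZMod 2) = cw j := fun j => hE1 j
    have hE2' : ∀ b : B, cw (E'.symm b) = (b : Fin n → ZMod 2) := by
      intro b
      conv_rhs => rw [← E'.apply_symm_apply b]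
      exact (hE1' _).symm
    set dB : B := ⟨y - x, sub_mem (SetLike.mem_coe.1 hy) (SetLike.mem_coe.1 hx)⟩ with hdB
    set τ : Equiv.Perm (Fin (2^k)) := (E'.trans (Equiv.addLeft dB)).trans E'.symm with hτdef
    have hτ : ∀ i, cw (τ i) = (y - x) + cw i := by
      intro i
      have : τ i = E'.symm (dB + E' i) := rfl
      rw [this, hE2']
      push_cast [hdB]
      rw [hE1']
    have hdist : ∀ z : Fin n → ZMod 2,
        hammingDist (y + e) ((y - x) + z) = hammingDist (x + e) z := by
      intro z
      rw [hammingDist_eq_hammingNorm, hammingDist_eq_hammingNorm]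
      congr 1
      abel
    have hFτ : ∀ σ : Equiv.Perm (Fin (2^k)), F y (σ.trans τ) = F x σ := by
      intro σ
      funext i
      show hammingDist (y + e) (cw (τ (σ i))) = hammingDist (x + e) (cw (σ i))
      rw [hτ (σ i)]
      exact hdist _
    show (Finset.univ.filter (fun σ => F x σ = t)).card
        = (Finset.univ.filter (fun σ => F y σ = t)).card
    refine Finset.card_bij' (fun σ _ => σ.trans τ) (fun σ _ => σ.trans τ.symm) ?_ ?_ ?_ ?_
    · intro σ hσ
      refine Finset.mem_filter.2 ⟨Finset.mem_univ _, ?_⟩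
      rw [hFτ σ]
      exact (Finset.mem_filter.1 hσ).2
    · intro σ hσ
      refine Finset.mem_filter.2 ⟨Finset.mem_univ _, ?_⟩
      have h5 : (σ.trans τ.symm).trans τ = σ := by
        ext i; simp
      have := hFτ (σ.trans τ.symm)
      rw [h5] at this
      rw [← this]
      exact (Finset.mem_filter.1 hσ).2
    · intro σ _
      ext i; simp
    · intro σ _
      ext i; simp
  -- marginal of T via nt
  have hTt : ∀ x ∈ (B : Set (Fin n → ZMod 2)), ∀ t,
      μ (T ⁻¹' {t}) = (nt x t : ENNReal) * (((2^k).factorial : ℕ) : ENNReal)⁻¹ := by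
    intro x hx t
    rw [hTm t]
    rw [← Finset.sum_filter_add_sum_filter_not Finset.univ
      (fun y => y ∈ (B : Set (Fin n → ZMod 2)))]
    have hz : ∑ y ∈ Finset.univ.filter
        (fun y => ¬ y ∈ (B : Set (Fin n → ZMod 2))),
        (nt y t : ENNReal) * (μ (c ⁻¹' {y}) * (((2^k).factorial : ℕ) : ENNReal)⁻¹) = 0 := by
      refine Finset.sum_eq_zero fun y hy => ?_
      rw [hcnot y (Finset.mem_filter.1 hy).2]
      simp
    rw [hz, add_zero]
    have he : ∀ y ∈ Finset.univ.filter (fun y => y ∈ (B : Set (Fin n → ZMod 2))),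
        (nt y t : ENNReal) * (μ (c ⁻¹' {y}) * (((2^k).factorial : ℕ) : ENNReal)⁻¹)
        = (nt x t : ENNReal) * ((((2^k : ℕ)) : ENNReal)⁻¹ * (((2^k).factorial : ℕ) : ENNReal)⁻¹) := by
      intro y hy
      have hyB := (Finset.mem_filter.1 hy).2
      rw [hinv y hyB x hx t, hcmem y hyB]
    rw [Finset.sum_congr rfl he, Finset.sum_const, hBcard', nsmul_eq_mul]
    have harr : ((2^k : ℕ) : ENNReal) * ((nt x t : ENNReal)
        * ((((2^k : ℕ)) : ENNReal)⁻¹ * (((2^k).factorial : ℕ) : ENNReal)⁻¹))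
        = (((2^k : ℕ) : ENNReal) * (((2^k : ℕ)) : ENNReal)⁻¹)
          * ((nt x t : ENNReal) * (((2^k).factorial : ℕ) : ENNReal)⁻¹) := by
      ring
    rw [harr, ENNReal.mul_inv_cancel hmE0 hmET, one_mul]
  -- independence
  have hpair : ∀ (x : Fin n → ZMod 2) (t : Fin (2^k) → ℕ),
      (fun ω => (c ω, T ω)) ⁻¹' {(x, t)} = c ⁻¹' {x} ∩ T ⁻¹' {t} := by
    intro x t
    ext ω
    simp [Prod.ext_iff]
  have hK : ∀ (x : Fin n → ZMod 2) (t : Fin (2^k) → ℕ),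
      μ ((fun ω => (c ω, T ω)) ⁻¹' {(x, t)}) = μ (c ⁻¹' {x}) * μ (T ⁻¹' {t}) := by
    intro x t
    rw [hpair, hjoint x t]
    by_cases hx : x ∈ (B : Set (Fin n → ZMod 2))
    · rw [hTt x hx t, hcmem x hx]
      ring
    · rw [hcnot x hx]
      simp
  -- support of T
  set Tfin : Finset (Fin (2^k) → ℕ) :=
    Finset.image (fun p : (Fin n → ZMod 2) × Equiv.Perm (Fin (2^k)) => F p.1 p.2) Finset.univ
    with hTfin
  have hTnot : ∀ t ∉ Tfin, μ (T ⁻¹' {t}) = 0 := by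
    intro t ht
    rw [hTm t]
    refine Finset.sum_eq_zero fun y _ => ?_
    have : nt y t = 0 := by
      rw [hnt]
      simp only [Finset.card_eq_zero, Finset.filter_eq_empty_iff]
      intro σ _
      intro hFt
      exact ht (Finset.mem_image.2 ⟨(y, σ), Finset.mem_univ _, hFt⟩)
    rw [this]
    simp
  have hsumT : ∑ t ∈ Tfin, μ (T ⁻¹' {t}) = 1 := by
    have h6 : ∀ t ∈ Tfin, μ (T ⁻¹' {t}) = ∑ y : Fin n → ZMod 2,
        (nt y t : ENNReal) * (μ (c ⁻¹' {y}) * (((2^k).factorial : ℕ) : ENNReal)⁻¹) :=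
      fun t _ => hTm t
    rw [Finset.sum_congr rfl h6, Finset.sum_comm]
    have h7 : ∀ y : Fin n → ZMod 2, ∑ t ∈ Tfin,
        (nt y t : ENNReal) * (μ (c ⁻¹' {y}) * (((2^k).factorial : ℕ) : ENNReal)⁻¹)
        = μ (c ⁻¹' {y}) := by
      intro y
      rw [← Finset.sum_mul]
      have h8 : ∑ t ∈ Tfin, (nt y t : ENNReal) = (((2^k).factorial : ℕ) : ENNReal) := by
        rw [← Nat.cast_sum]
        norm_cast
        rw [hnt]
        have h9 : (Finset.univ : Finset (Equiv.Perm (Fin (2^k)))).card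
            = ∑ t ∈ Tfin, (Finset.univ.filter (fun σ => F y σ = t)).card := by
          refine Finset.card_eq_sum_card_fiberwise fun σ _ => ?_
          exact Finset.mem_image.2 ⟨(y, σ), Finset.mem_univ _, rfl⟩
        rw [← h9, Finset.card_univ, Fintype.card_perm, Fintype.card_fin]
      rw [h8]
      have harr2 : (((2^k).factorial : ℕ) : ENNReal) * (μ (c ⁻¹' {y})
          * (((2^k).factorial : ℕ) : ENNReal)⁻¹)
          = ((((2^k).factorial : ℕ) : ENNReal) * (((2^k).factorial : ℕ) : ENNReal)⁻¹)
            * μ (c ⁻¹' {y}) := by ring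
      rw [harr2, ENNReal.mul_inv_cancel hME0 hMET, one_mul]
    rw [Finset.sum_congr rfl fun y _ => h7 y]
    exact hsumc
  -- pass to real numbers
  have hptot : ∑ x : Fin n → ZMod 2, (μ (c ⁻¹' {x})).toReal = 1 := by
    rw [← ENNReal.toReal_sum (fun a _ => measure_ne_top μ _), hsumc, ENNReal.toReal_one]
  have hqtot : ∑ t ∈ Tfin, (μ (T ⁻¹' {t})).toReal = 1 := by
    rw [← ENNReal.toReal_sum (fun a _ => measure_ne_top μ _), hsumT, ENNReal.toReal_one]
  have hHc : shannonEntropy μ c = -∑ x : Fin n → ZMod 2,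
      ((μ (c ⁻¹' {x})).toReal * Real.log (μ (c ⁻¹' {x})).toReal) := by
    rw [shannonEntropy, tsum_fintype]
  have hHT : shannonEntropy μ T = -∑ t ∈ Tfin,
      ((μ (T ⁻¹' {t})).toReal * Real.log (μ (T ⁻¹' {t})).toReal) := by
    rw [shannonEntropy]
    congr 1
    refine tsum_eq_sum fun t ht => ?_
    rw [hTnot t ht]
    simp
  have hterm : ∀ a : (Fin n → ZMod 2) × (Fin (2^k) → ℕ),
      (μ ((fun ω => (c ω, T ω)) ⁻¹' {a})).toReal
      = (μ (c ⁻¹' {a.1})).toReal * (μ (T ⁻¹' {a.2})).toReal := by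
    intro a
    rw [← ENNReal.toReal_mul, ← hK a.1 a.2]
  have hHcT : shannonEntropy μ (fun ω => (c ω, T ω))
      = -∑ a ∈ Finset.univ ×ˢ Tfin,
        ((μ (c ⁻¹' {a.1})).toReal * (μ (T ⁻¹' {a.2})).toReal
          * Real.log ((μ (c ⁻¹' {a.1})).toReal * (μ (T ⁻¹' {a.2})).toReal)) := by
    rw [shannonEntropy]
    congr 1
    have hz : ∀ a : (Fin n → ZMod 2) × (Fin (2^k) → ℕ), a ∉ Finset.univ ×ˢ Tfin →
        (μ ((fun ω => (c ω, T ω)) ⁻¹' {a})).toReal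
          * Real.log (μ ((fun ω => (c ω, T ω)) ⁻¹' {a})).toReal = 0 := by
      intro a ha
      have h10 : a.2 ∉ Tfin := by
        intro h
        exact ha (Finset.mem_product.2 ⟨Finset.mem_univ _, h⟩)
      rw [hterm a, hTnot _ h10]
      simp
    rw [tsum_eq_sum hz]
    exact Finset.sum_congr rfl fun a _ => by rw [hterm a]
  have hlog : ∀ a b : ℝ, (a * b) * Real.log (a * b)
      = b * (a * Real.log a) + a * (b * Real.log b) := by
    intro a b
    by_cases ha : a = 0
    · simp [ha]
    by_cases hb : b = 0
    · simp [hb]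
    rw [Real.log_mul ha hb]
    ring
  have hsplit : ∑ a ∈ Finset.univ ×ˢ Tfin,
      ((μ (c ⁻¹' {a.1})).toReal * (μ (T ⁻¹' {a.2})).toReal
        * Real.log ((μ (c ⁻¹' {a.1})).toReal * (μ (T ⁻¹' {a.2})).toReal))
      = (∑ x : Fin n → ZMod 2, ((μ (c ⁻¹' {x})).toReal * Real.log (μ (c ⁻¹' {x})).toReal))
        + (∑ t ∈ Tfin, ((μ (T ⁻¹' {t})).toReal * Real.log (μ (T ⁻¹' {t})).toReal)) := by
    rw [Finset.sum_product]
    calc ∑ x : Fin n → ZMod 2, ∑ t ∈ Tfin,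
          ((μ (c ⁻¹' {x})).toReal * (μ (T ⁻¹' {t})).toReal
            * Real.log ((μ (c ⁻¹' {x})).toReal * (μ (T ⁻¹' {t})).toReal))
        = ∑ x : Fin n → ZMod 2, ∑ t ∈ Tfin,
          ((μ (T ⁻¹' {t})).toReal
              * ((μ (c ⁻¹' {x})).toReal * Real.log (μ (c ⁻¹' {x})).toReal)
            + (μ (c ⁻¹' {x})).toReal
              * ((μ (T ⁻¹' {t})).toReal * Real.log (μ (T ⁻¹' {t})).toReal)) := by
          exact Finset.sum_congr rfl fun x _ => Finset.sum_congr rfl fun t _ => hlog _ _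
      _ = ∑ x : Fin n → ZMod 2,
          ((∑ t ∈ Tfin, (μ (T ⁻¹' {t})).toReal)
              * ((μ (c ⁻¹' {x})).toReal * Real.log (μ (c ⁻¹' {x})).toReal)
            + (μ (c ⁻¹' {x})).toReal
              * ∑ t ∈ Tfin, ((μ (T ⁻¹' {t})).toReal * Real.log (μ (T ⁻¹' {t})).toReal)) := by
          refine Finset.sum_congr rfl fun x _ => ?_
          rw [Finset.sum_add_distrib, ← Finset.sum_mul, ← Finset.mul_sum]
      _ = _ := by
          rw [hqtot]
          rw [Finset.sum_add_distrib, ← Finset.sum_mul, hptot]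
          simp only [one_mul]
  rw [condShannonEntropy, hHcT, hHT, hHc, hsplit]
  ring
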